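/- For every integer n ≥ 0, every integer k, every integer m ≥ 1, and every real x: E_{n,p,q}^{(k)}(m·x) = Σ_{i=0}^{n} binom(n,i) · E_{i,p,q}^{(k)}(x) · (m−1)^{n−i} · x^{n−i}. -/

import Mathlib

open Finset

/-- The `(p,q)`-integer `[m]_{p,q} = (p^m - q^m)/(p - q)`. -/
noncomputable def pqInt (p q : ℝ) (m : ℕ) : ℝ := (p ^ m - q ^ m) / (p - q)

/-- The exponential generating function `∑ f n * t^n / n!` of a sequence `f`. -/
noncomputable def egf (f : ℕ → ℝ) : PowerSeries ℝ :=
  PowerSeries.mk fun n => f n / n.factorial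

/-- Formal substitution of a power series `S` with zero constant term into the
`(p,q)`-polylogarithm `Li_{k,p,q}(s) = ∑_{m ≥ 1} s^m / [m]_{p,q}^k`.
(For `m > n` the series `S^m` has zero `n`-th coefficient, so the sum is finite.) -/
noncomputable def pqLi (p q : ℝ) (k : ℤ) (S : PowerSeries ℝ) : PowerSeries ℝ :=
  PowerSeries.mk fun n =>
    ∑ m ∈ Finset.Icc 1 n, PowerSeries.coeff n (S ^ m) / pqInt p q m ^ k

/-! Dividing the generating function by the unit `1 + eᵗ` shows that `egf (E x)` is an
`x`-independent series times `e^{xt}`. Hence `egf (E (x + y)) = egf (E x) * e^{yt}`, and comparing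
coefficients gives the binomial addition formula of an Appell sequence; take `y = (m - 1) x`. -/

open PowerSeries

theorem egf_injective : Function.Injective egf := by
  intro f g h
  funext n
  have := congrArg (coeff n) h
  simp only [egf, coeff_mk] at this
  exact (div_left_inj' (Nat.cast_ne_zero.2 n.factorial_ne_zero)).1 this

theorem rescale_exp_eq_egf (a : ℝ) : rescale a (exp ℝ) = egf fun n => a ^ n := by
  ext n
  simp [egf, coeff_exp, div_eq_mul_inv]

theorem egf_mul_egf (f g : ℕ → ℝ) :
    egf f * egf g = egf fun n => ∑ i ∈ range (n + 1), (n.choose i : ℝ) * f i * g (n - i) := by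
  ext n
  rw [coeff_mul,
    Nat.sum_antidiagonal_eq_sum_range_succ (fun i j => coeff i (egf f) * coeff j (egf g))]
  simp only [egf, coeff_mk, sum_div]
  refine sum_congr rfl fun i hi => ?_
  rw [Nat.cast_choose ℝ (Nat.lt_succ_iff.1 (mem_range.1 hi))]
  field_simp

theorem egf_add_arg_of_genFun {L D : PowerSeries ℝ} (hD : IsUnit D) {E : ℝ → ℕ → ℝ}
    (hE : ∀ x, L * rescale x (exp ℝ) = D * egf (E x)) (x y : ℝ) :
    egf (E (x + y)) = egf (E x) * rescale y (exp ℝ) := by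
  apply hD.mul_left_cancel
  rw [← mul_assoc, ← hE, ← hE, mul_assoc, exp_mul_exp_eq_exp_add]

theorem add_arg_eq_sum_choose_of_genFun {L D : PowerSeries ℝ} (hD : IsUnit D) {E : ℝ → ℕ → ℝ}
    (hE : ∀ x, L * rescale x (exp ℝ) = D * egf (E x)) (x y : ℝ) (n : ℕ) :
    E (x + y) n = ∑ i ∈ range (n + 1), (n.choose i : ℝ) * E x i * y ^ (n - i) := by
  have h := egf_add_arg_of_genFun hD hE x y
  rw [rescale_exp_eq_egf, egf_mul_egf] at h
  exact congrFun (egf_injective h) n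

theorem pqPolyEuler_nat_mul_arg
    (p q : ℝ) (k : ℤ)
    (E : ℝ → ℕ → ℝ)
    (hE : ∀ x : ℝ,
      2 * pqLi p q k (1 - PowerSeries.rescale (-1) (PowerSeries.exp ℝ)) *
          PowerSeries.rescale x (PowerSeries.exp ℝ) =
        (1 + PowerSeries.exp ℝ) * egf (E x)) :
    ∀ (n : ℕ) (m : ℕ), 1 ≤ m → ∀ x : ℝ,
      E ((m : ℝ) * x) n =
        ∑ i ∈ Finset.range (n + 1),
          (n.choose i : ℝ) * E x i * ((m : ℝ) - 1) ^ (n - i) * x ^ (n - i) := by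
  intro n m _ x
  have hunit : IsUnit (1 + exp ℝ) := isUnit_iff_constantCoeff.2 (by norm_num)
  rw [show (m : ℝ) * x = x + (m - 1) * x by ring, add_arg_eq_sum_choose_of_genFun hunit hE]
  simp only [mul_pow, mul_assoc]
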